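/- For every x ∈ 𝕋 and every positive integer n, the measure μ satisfies the inequality μ({x}) ≤ μ({x + 2^{-n}}) + μ({x - 2^{-n}}), where the points are taken modulo 1. More generally, μ ≤ (δ_{2^{-n}} + δ_{-2^{-n}}) ⋆ μ as an inequality of positive measures on 𝕋. -/

import Mathlib

open MeasureTheory Filter Topology Real
open scoped ENNReal

noncomputable section

/-- Stern's diatomic sequence: s(0)=0, s(1)=1, s(2n)=s(n), s(2n+1)=s(n)+s(n+1). -/
def stern : ℕ → ℕ
  | 0 => 0
  | 1 => 1
  | n + 2 =>
    if h : n % 2 = 0 then stern (n / 2 + 1)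
    else stern (n / 2 + 1) + stern (n / 2 + 2)
decreasing_by all_goals omega
/-- The probability measure μ_n = 3^{-n} ∑_{m=0}^{2^n-1} s(2^n+m) δ_{m/2^n} on the 1-torus. -/
def sternMeasure (n : ℕ) : Measure UnitAddCircle :=
  ((3 : ℝ≥0∞) ^ n)⁻¹ • ∑ m ∈ Finset.range (2 ^ n),
    (stern (2 ^ n + m) : ℝ≥0∞) • Measure.dirac ((m / 2 ^ n : ℝ) : UnitAddCircle)

/-! The weights `s(2^k + m)`, extended `2^k`-periodically in `m`, satisfy
`w_{k+1}(2m) = w_k(m)` and `w_{k+1}(2m+1) = w_k(m) + w_k(m+1)`; induction on `j` along this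
recursion gives `w_k(m) ≤ w_k(m - 2^j) + w_k(m + 2^j)` for `j ≤ k`. With `j = k - n` this is the
inequality `μ_k ≤ (δ_a + δ_{-a}) ⋆ μ_k`, `a = 2^{-n}`, for every `k ≥ n`. Integrated against
nonnegative continuous functions it passes to the weak limit `μ`, and on a metrizable space such
integrals determine the order of finite measures through outer approximation of closed sets. -/

theorem stern_two_mul (j : ℕ) : stern (2 * j) = stern j := by
  rcases j with _ | i
  · rfl
  · rw [show 2 * (i + 1) = 2 * i + 2 by ring, stern]
    simp [show 2 * i / 2 = i by omega]

theorem stern_two_mul_add_one (j : ℕ) : stern (2 * j + 1) = stern j + stern (j + 1) := by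
  rcases j with _ | i
  · simp [stern]
  · rw [show 2 * (i + 1) + 1 = (2 * i + 1) + 2 by ring, stern]
    simp [show (2 * i + 1) / 2 = i by omega, Nat.add_mod]

theorem stern_two_pow (k : ℕ) : stern (2 ^ k) = 1 := by
  induction k with
  | zero => simp [stern]
  | succ k ih => rw [pow_succ', stern_two_mul, ih]

/-- The mass of `μ_k` at `x / 2^k`, up to the factor `3^{-k}`; indexing by `ZMod (2^k)` builds in
the wrap-around of the torus. -/
def sternWeight (k : ℕ) (x : ZMod (2 ^ k)) : ℕ := stern (2 ^ k + x.val)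

theorem Int.two_mul_add_emod_two_mul {m N r : ℤ} (hN : 0 < N) (hr₀ : 0 ≤ r) (hr : r < 2) :
    (2 * m + r) % (2 * N) = 2 * (m % N) + r := by
  have hm := Int.emod_add_mul_ediv m N
  have h₀ := Int.emod_nonneg m hN.ne'
  have h₁ := Int.emod_lt_of_pos m hN
  calc (2 * m + r) % (2 * N) = (2 * (m % N) + r + 2 * N * (m / N)) % (2 * N) := by
        congr 1; linarith
    _ = 2 * (m % N) + r := by
        rw [Int.add_mul_emod_self_left, Int.emod_eq_of_lt (by omega) (by omega)]

theorem val_intCast_two_mul_add {k : ℕ} (m : ℤ) {r : ℕ} (hr : r < 2) :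
    ((2 * m + r : ℤ) : ZMod (2 ^ (k + 1))).val = 2 * (m : ZMod (2 ^ k)).val + r := by
  apply (Nat.cast_inj (R := ℤ)).mp
  rw [Nat.cast_add, Nat.cast_mul, ZMod.val_intCast, ZMod.val_intCast]
  push_cast
  rw [pow_succ', Int.two_mul_add_emod_two_mul (by positivity) (by positivity) (by omega)]

theorem sternWeight_add_one {k : ℕ} (x : ZMod (2 ^ k)) :
    sternWeight k (x + 1) = stern (2 ^ k + x.val + 1) := by
  have hx := ZMod.val_lt x
  rw [sternWeight, ZMod.val_add, ZMod.val_one_eq_one_mod, Nat.add_mod_mod]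
  rcases (Nat.lt_or_ge (x.val + 1) (2 ^ k)) with h | h
  · rw [Nat.mod_eq_of_lt h, add_assoc]
  · -- wrap-around: `s(2^k + 2^k) = s(2^k + 0)`
    rw [add_assoc, show x.val + 1 = 2 ^ k by omega, Nat.mod_self, add_zero, ← two_mul,
      stern_two_mul]

theorem sternWeight_intCast_two_mul (k : ℕ) (m : ℤ) :
    sternWeight (k + 1) ↑(2 * m) = sternWeight k m := by
  have := val_intCast_two_mul_add (k := k) m (r := 0) (by norm_num)
  simp only [Nat.cast_zero, add_zero] at this
  rw [sternWeight, sternWeight, this, pow_succ', ← mul_add, stern_two_mul]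

theorem sternWeight_intCast_two_mul_add_one (k : ℕ) (m : ℤ) :
    sternWeight (k + 1) ↑(2 * m + 1) = sternWeight k m + sternWeight k ↑(m + 1) := by
  have := val_intCast_two_mul_add (k := k) m (r := 1) (by norm_num)
  rw [Nat.cast_one] at this
  rw [sternWeight, this, pow_succ', ← add_assoc, ← mul_add, stern_two_mul_add_one, Int.cast_add,
    Int.cast_one, sternWeight_add_one, sternWeight]

theorem sternWeight_intCast_le_sub_add {j k : ℕ} (hjk : j ≤ k) (m : ℤ) :
    sternWeight k m ≤ sternWeight k ↑(m - 2 ^ j) + sternWeight k ↑(m + 2 ^ j) := by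
  induction j generalizing k m with
  | zero =>
    rcases k with _ | k
    · have hval (x : ZMod (2 ^ 0)) : x.val = 0 := Nat.lt_one_iff.mp x.val_lt
      simp [sternWeight, hval, stern]
    obtain ⟨a, rfl | rfl⟩ := Int.even_or_odd' m
    · rw [show 2 * a - 2 ^ 0 = 2 * (a - 1) + 1 by ring, show 2 * a + 2 ^ 0 = 2 * a + 1 by ring]
      simp only [sternWeight_intCast_two_mul, sternWeight_intCast_two_mul_add_one, sub_add_cancel]
      omega
    · rw [show 2 * a + 1 - 2 ^ 0 = 2 * a by ring, show 2 * a + 1 + 2 ^ 0 = 2 * (a + 1) by ring]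
      simp only [sternWeight_intCast_two_mul, sternWeight_intCast_two_mul_add_one, le_refl]
  | succ j ih =>
    obtain ⟨k, rfl⟩ : ∃ k', k = k' + 1 := ⟨k - 1, by omega⟩
    have ih := @ih k (by omega)
    obtain ⟨a, rfl | rfl⟩ := Int.even_or_odd' m
    · rw [show 2 * a - 2 ^ (j + 1) = 2 * (a - 2 ^ j) by ring,
        show 2 * a + 2 ^ (j + 1) = 2 * (a + 2 ^ j) by ring]
      simp only [sternWeight_intCast_two_mul]
      exact ih a
    · rw [show 2 * a + 1 - 2 ^ (j + 1) = 2 * (a - 2 ^ j) + 1 by ring,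
        show 2 * a + 1 + 2 ^ (j + 1) = 2 * (a + 2 ^ j) + 1 by ring]
      simp only [sternWeight_intCast_two_mul_add_one]
      have h₁ := ih a
      have h₂ := ih (a + 1)
      rw [show a + 1 - 2 ^ j = a - 2 ^ j + 1 by ring, show a + 1 + 2 ^ j = a + 2 ^ j + 1 by ring]
        at h₂
      omega

theorem sternWeight_le_sub_add {j k : ℕ} (hjk : j ≤ k) (x : ZMod (2 ^ k)) :
    sternWeight k x ≤ sternWeight k (x - 2 ^ j) + sternWeight k (x + 2 ^ j) := by
  obtain ⟨m, rfl⟩ := ZMod.intCast_surjective x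
  exact_mod_cast sternWeight_intCast_le_sub_add hjk m

instance MeasureTheory.Measure.sFinite_fintype_sum {α ι : Type*} [MeasurableSpace α] [Fintype ι]
    (μ : ι → Measure α) [∀ i, SFinite (μ i)] : SFinite (∑ i, μ i) := by
  rw [← Measure.sum_fintype]
  infer_instance

section Translates

variable {X : Type*} [AddCommGroup X] [MeasurableSpace X] [MeasurableAdd₂ X]

theorem sum_smul_dirac_le_dirac_add_dirac_conv {G : Type*} [AddCommGroup G] [Fintype G] (p : G →+ X)
    (w : G → ℝ≥0∞) (h : G) (hw : ∀ x, w x ≤ w (x - h) + w (x + h)) :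
    ∑ x, w x • Measure.dirac (p x) ≤
      (Measure.dirac (p h) + Measure.dirac (-p h)) ∗ ∑ x, w x • Measure.dirac (p x) := by
  have hmeas (c : X) : Measurable (c + ·) := measurable_const_add c
  rw [Measure.add_conv, Measure.dirac_conv, Measure.dirac_conv,
    Measure.map_finset_sum' (hmeas _).aemeasurable, Measure.map_finset_sum' (hmeas _).aemeasurable]
  have hshift (c : G) :
      ∑ x, w x • Measure.dirac (p c + p x) = ∑ x, w (x - c) • Measure.dirac (p x) :=
    Fintype.sum_equiv (Equiv.addRight c) _ _ fun x => by simp [add_comm]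
  simp only [Measure.map_smul, Measure.map_dirac' (hmeas _), ← map_neg, hshift, sub_neg_eq_add,
    ← Finset.sum_add_distrib, ← add_smul]
  gcongr with x
  exact hw x

theorem dirac_add_dirac_conv_apply_singleton [MeasurableSingletonClass X] (a b x : X)
    (μ : Measure X) [SFinite μ] :
    ((Measure.dirac a + Measure.dirac b) ∗ μ) {x} = μ {x - a} + μ {x - b} := by
  rw [Measure.add_conv, Measure.dirac_conv, Measure.dirac_conv, Measure.add_apply,
    Measure.map_apply (measurable_const_add a) (measurableSet_singleton x),
    Measure.map_apply (measurable_const_add b) (measurableSet_singleton x),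
    Set.preimage_add_left_singleton, Set.preimage_add_left_singleton, neg_add_eq_sub,
    neg_add_eq_sub]

theorem integral_dirac_add_dirac_conv [TopologicalSpace X] [OpensMeasurableSpace X]
    [CompactSpace X] (a b : X) (μ : Measure X) [IsFiniteMeasure μ] (f : C(X, ℝ)) :
    ∫ x, f x ∂((Measure.dirac a + Measure.dirac b) ∗ μ) =
      ∫ x, f (a + x) ∂μ + ∫ x, f (b + x) ∂μ := by
  have hf (ν : Measure X) [IsFiniteMeasure ν] : Integrable f ν :=
    (BoundedContinuousFunction.mkOfCompact f).integrable ν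
  rw [Measure.add_conv, Measure.dirac_conv, Measure.dirac_conv, integral_add_measure (hf _) (hf _),
    integral_map (measurable_const_add a).aemeasurable f.continuous.aestronglyMeasurable,
    integral_map (measurable_const_add b).aemeasurable f.continuous.aestronglyMeasurable]

end Translates

section WeakLimit

open BoundedContinuousFunction
open scoped NNReal

variable {X : Type*} [TopologicalSpace X] [TopologicalSpace.PseudoMetrizableSpace X]
  [MeasurableSpace X] [BorelSpace X]

theorem MeasureTheory.Measure.le_of_forall_integral_le {μ ν : Measure X} [IsFiniteMeasure μ]
    [IsFiniteMeasure ν] (h : ∀ f : C(X, ℝ), 0 ≤ f → ∫ x, f x ∂μ ≤ ∫ x, f x ∂ν) : μ ≤ ν := by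
  have hlintegral (g : X →ᵇ ℝ≥0) : ∫⁻ x, g x ∂μ ≤ ∫⁻ x, g x ∂ν := by
    rw [lintegral_coe_eq_integral _ (g.integrable_of_nnreal μ),
      lintegral_coe_eq_integral _ (g.integrable_of_nnreal ν)]
    exact ENNReal.ofReal_le_ofReal (h ⟨fun x => g x, by fun_prop⟩ fun x => (g x).2)
  have hclosed {F : Set X} (hF : IsClosed F) : μ F ≤ ν F :=
    le_of_tendsto_of_tendsto' (HasOuterApproxClosed.tendsto_lintegral_apprSeq hF μ)
      (HasOuterApproxClosed.tendsto_lintegral_apprSeq hF ν) fun n => hlintegral _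
  refine Measure.le_iff.2 fun s hs => ?_
  rw [hs.measure_eq_iSup_isClosed_of_ne_top (measure_ne_top μ s)]
  exact iSup₂_le fun F hFs => iSup_le fun hF => (hclosed hF).trans (measure_mono hFs)

theorem le_dirac_add_dirac_conv_of_tendsto [CompactSpace X] [AddCommGroup X] [ContinuousAdd X]
    [MeasurableAdd₂ X] {μs : ℕ → Measure X} [∀ k, IsFiniteMeasure (μs k)]
    {μ : Measure X} [IsFiniteMeasure μ] {a b : X}
    (hlim : ∀ f : C(X, ℝ), Tendsto (fun k => ∫ x, f x ∂μs k) atTop (𝓝 (∫ x, f x ∂μ)))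
    (hle : ∀ᶠ k in atTop, μs k ≤ (Measure.dirac a + Measure.dirac b) ∗ μs k) :
    μ ≤ (Measure.dirac a + Measure.dirac b) ∗ μ := by
  refine Measure.le_of_forall_integral_le fun f hf => ?_
  have htranslate (c : X) :
      Tendsto (fun k => ∫ x, f (c + x) ∂μs k) atTop (𝓝 (∫ x, f (c + x) ∂μ)) :=
    hlim (f.comp ⟨(c + ·), continuous_const_add c⟩)
  rw [integral_dirac_add_dirac_conv]
  refine le_of_tendsto_of_tendsto (hlim f) ((htranslate a).add (htranslate b))
    (hle.mono fun k hk => ?_)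
  dsimp only
  rw [← integral_dirac_add_dirac_conv]
  exact integral_mono_measure hk (ae_of_all _ hf) ((mkOfCompact f).integrable _)

end WeakLimit

instance isFiniteMeasure_sternMeasure (k : ℕ) : IsFiniteMeasure (sternMeasure k) := by
  constructor
  simp only [sternMeasure, Measure.smul_apply, Measure.coe_finsetSum, Finset.sum_apply,
    measure_univ, smul_eq_mul, mul_one]
  exact ENNReal.mul_lt_top (ENNReal.inv_lt_top.2 (by positivity)) (by simp [ENNReal.sum_lt_top])

theorem sternMeasure_eq_sum (k : ℕ) :
    sternMeasure k = ((3 : ℝ≥0∞) ^ k)⁻¹ •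
      ∑ x : ZMod (2 ^ k), (sternWeight k x : ℝ≥0∞) • Measure.dirac (ZMod.toAddCircle x) := by
  rw [sternMeasure]
  congr 1
  refine Finset.sum_nbij' (fun m => (m : ZMod (2 ^ k))) ZMod.val (by simp)
    (fun x _ => Finset.mem_range.2 x.val_lt) (fun m hm => ZMod.val_cast_of_lt (by simpa using hm))
    (fun x _ => ZMod.natCast_zmod_val x) fun m hm => ?_
  rw [sternWeight, ZMod.toAddCircle_natCast, ZMod.val_cast_of_lt (by simpa using hm)]
  push_cast
  rfl

theorem toAddCircle_two_pow {n k : ℕ} (h : n ≤ k) :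
    ZMod.toAddCircle ((2 : ZMod (2 ^ k)) ^ (k - n)) = (((2 : ℝ) ^ n)⁻¹ : ℝ) := by
  rw [show (2 : ZMod (2 ^ k)) ^ (k - n) = ((2 ^ (k - n) : ℕ) : ZMod (2 ^ k)) by push_cast; rfl,
    ZMod.toAddCircle_natCast]
  congr 1
  rw [Nat.cast_pow, Nat.cast_pow, Nat.cast_ofNat, div_eq_iff (by positivity), ← div_eq_inv_mul,
    eq_div_iff (by positivity), ← pow_add, Nat.sub_add_cancel h]

theorem sternMeasure_le_conv {n k : ℕ} (h : n ≤ k) :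
    sternMeasure k ≤ (Measure.dirac ((((2 : ℝ) ^ n)⁻¹ : ℝ) : UnitAddCircle)
      + Measure.dirac (-((((2 : ℝ) ^ n)⁻¹ : ℝ) : UnitAddCircle))) ∗ sternMeasure k := by
  rw [sternMeasure_eq_sum, Measure.conv_smul_right, ← toAddCircle_two_pow h]
  gcongr
  exact sum_smul_dirac_le_dirac_add_dirac_conv _ _ _ fun x => by
    exact_mod_cast sternWeight_le_sub_add (Nat.sub_le k n) x

theorem sternLimit_atom_inequality_general (μ : Measure UnitAddCircle)
    (hμ : IsProbabilityMeasure μ)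
    (hlim : ∀ f : C(UnitAddCircle, ℝ),
      Tendsto (fun n => ∫ x, f x ∂(sternMeasure n)) atTop (𝓝 (∫ x, f x ∂μ)))
    (n : ℕ) :
    (∀ x : UnitAddCircle,
      μ {x} ≤ μ {x + (((((2 : ℝ) ^ n)⁻¹ : ℝ)) : UnitAddCircle)}
            + μ {x - (((((2 : ℝ) ^ n)⁻¹ : ℝ)) : UnitAddCircle)}) ∧
    μ ≤ (Measure.dirac (((((2 : ℝ) ^ n)⁻¹ : ℝ)) : UnitAddCircle)
          + Measure.dirac (((-(((2 : ℝ) ^ n)⁻¹) : ℝ)) : UnitAddCircle)).conv μ := by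
  have hle := le_dirac_add_dirac_conv_of_tendsto hlim
    (eventually_atTop.2 ⟨n, fun k hk => sternMeasure_le_conv hk⟩)
  refine ⟨fun x => ?_, by rwa [AddCircle.coe_neg]⟩
  calc μ {x} ≤ _ := Measure.le_iff'.1 hle {x}
    _ = _ := by rw [dirac_add_dirac_conv_apply_singleton, sub_neg_eq_add, add_comm]

/-- For every x ∈ 𝕋 and n ≥ 1: μ({x}) ≤ μ({x + 2^{-n}}) + μ({x - 2^{-n}}); more generally
μ ≤ (δ_{2^{-n}} + δ_{-2^{-n}}) ⋆ μ as an inequality of positive measures on 𝕋. -/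
theorem sternLimit_atom_inequality (μ : Measure UnitAddCircle)
    (hμ : IsProbabilityMeasure μ)
    (hlim : ∀ f : C(UnitAddCircle, ℝ),
      Tendsto (fun n => ∫ x, f x ∂(sternMeasure n)) atTop (𝓝 (∫ x, f x ∂μ)))
    (n : ℕ) (hn : 1 ≤ n) :
    (∀ x : UnitAddCircle,
      μ {x} ≤ μ {x + (((((2 : ℝ) ^ n)⁻¹ : ℝ)) : UnitAddCircle)}
            + μ {x - (((((2 : ℝ) ^ n)⁻¹ : ℝ)) : UnitAddCircle)}) ∧
    μ ≤ (Measure.dirac (((((2 : ℝ) ^ n)⁻¹ : ℝ)) : UnitAddCircle)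
          + Measure.dirac (((-(((2 : ℝ) ^ n)⁻¹) : ℝ)) : UnitAddCircle)).conv μ :=
  sternLimit_atom_inequality_general μ hμ hlim n
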